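/- arXiv:2603.07232 — 3 statements merged into one kernel-verified Lean document; each statement's English description precedes it below -/
import Mathlib

section
/- For positive integers m and c, the equation m^2 - m + 4 = c^2 holds if and only if (m, c) ∈ {(1, 2), (4, 4)}. -/
/-! For `m > 4` the value `m ^ 2 - m + 4` lies strictly between the consecutive squares
`(m - 1) ^ 2` and `m ^ 2`, so it is not a square; the cases `m ≤ 4` are checked directly. -/

theorem Int.not_sq_between_consecutive_sq {a c : ℤ} (ha : 0 ≤ a) (hc : 0 ≤ c)
    (hl : a ^ 2 < c ^ 2) (hr : c ^ 2 < (a + 1) ^ 2) : False := by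
  have hac : a < c := (pow_lt_pow_iff_left₀ ha hc two_ne_zero).1 hl
  have hca : c < a + 1 := (pow_lt_pow_iff_left₀ hc (by omega) two_ne_zero).1 hr
  omega

theorem le_four_of_sq_sub_add_four_eq_sq {m c : ℤ} (hc : 0 < c)
    (h : m ^ 2 - m + 4 = c ^ 2) : m ≤ 4 := by
  by_contra! hm4
  exact Int.not_sq_between_consecutive_sq (a := m - 1) (by omega) hc.le
    (by nlinarith) (by nlinarith)

theorem stmt_0 (m c : ℤ) (hm : 0 < m) (hc : 0 < c) :
    m ^ 2 - m + 4 = c ^ 2 ↔ (m = 1 ∧ c = 2) ∨ (m = 4 ∧ c = 4) := by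
  constructor
  · intro h
    have hm4 : m ≤ 4 := le_four_of_sq_sub_add_four_eq_sq hc h
    have hc4 : c ≤ 4 := by nlinarith
    interval_cases m <;> interval_cases c <;> omega
  · rintro (⟨rfl, rfl⟩ | ⟨rfl, rfl⟩) <;> norm_num
end

section
/- For n = 4, the positive integers m for which (m+8)^2 - 16m is a perfect square are exactly m ∈ {6, 15}, and for none of these is 25m^2 + 400 - 56m a perfect square. Hence there is no positive integer m such that both (m+8)^2 - 16m and 25m^2 - 56m + 400 are perfect squares. -/
/-!
Since `(m + 8) ^ 2 - 16 * m = m ^ 2 + 64`, a square value `c ^ 2` (with `c ≥ 0`) factors as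
`(c - m) * (c + m) = 64`; the smaller factor `a = c - m` satisfies `a ^ 2 < 64`, and only
`a = 2` and `a = 4` leave an integer `m > 0`, namely `15` and `6`. At these two values
`25 * m ^ 2 - 56 * m + 400` is `964` and `5185`, which lie strictly between `31 ^ 2` and `32 ^ 2`,
respectively `72 ^ 2` and `73 ^ 2`.
-/

theorem Int.not_exists_sq_of_lt_of_lt {n k : ℤ} (hk : 0 ≤ k) (hl : k ^ 2 < n)
    (hr : n < (k + 1) ^ 2) : ¬ ∃ d : ℤ, n = d ^ 2 := by
  rintro ⟨d, rfl⟩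
  have hlow : |k| < |d| := sq_lt_sq.mp hl
  have hup : |d| < |k + 1| := sq_lt_sq.mp hr
  rw [abs_of_nonneg hk] at hlow
  rw [abs_of_nonneg (by omega : (0 : ℤ) ≤ k + 1)] at hup
  omega

theorem Int.sq_add_sixtyFour_eq_sq_iff {m : ℤ} (hm : 0 < m) :
    (∃ c : ℤ, m ^ 2 + 64 = c ^ 2) ↔ m = 6 ∨ m = 15 := by
  constructor
  · rintro ⟨c, hc⟩
    obtain ⟨a, hb, hmb⟩ : ∃ a, 0 ≤ m + a ∧ m ^ 2 + 64 = (m + a) ^ 2 :=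
      ⟨|c| - m, by simp, by rw [add_sub_cancel, sq_abs, hc]⟩
    have ha : 0 < a := by nlinarith
    have hfactor : a * (a + 2 * m) = 64 := by linarith
    have ha7 : a ≤ 7 := by nlinarith
    interval_cases a <;> omega
  · rintro (rfl | rfl)
    exacts [⟨10, by norm_num⟩, ⟨17, by norm_num⟩]

theorem stmt_10 :
    (∀ m : ℤ, 0 < m →
      ((∃ c : ℤ, (m + 8) ^ 2 - 16 * m = c ^ 2) ↔ m = 6 ∨ m = 15)) ∧
    (∀ m : ℤ, (m = 6 ∨ m = 15) →
      ¬ ∃ d : ℤ, 25 * m ^ 2 - 56 * m + 400 = d ^ 2) ∧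
    ¬ ∃ m : ℤ, 0 < m ∧ (∃ c : ℤ, (m + 8) ^ 2 - 16 * m = c ^ 2) ∧
      (∃ d : ℤ, 25 * m ^ 2 - 56 * m + 400 = d ^ 2) := by
  have hfirst : ∀ m : ℤ, 0 < m →
      ((∃ c : ℤ, (m + 8) ^ 2 - 16 * m = c ^ 2) ↔ m = 6 ∨ m = 15) := fun m hm => by
    simpa only [show (m + 8) ^ 2 - 16 * m = m ^ 2 + 64 by ring] using
      Int.sq_add_sixtyFour_eq_sq_iff hm
  have hsecond : ∀ m : ℤ, (m = 6 ∨ m = 15) →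
      ¬ ∃ d : ℤ, 25 * m ^ 2 - 56 * m + 400 = d ^ 2 := by
    rintro m (rfl | rfl)
    · exact Int.not_exists_sq_of_lt_of_lt (k := 31) (by norm_num) (by norm_num) (by norm_num)
    · exact Int.not_exists_sq_of_lt_of_lt (k := 72) (by norm_num) (by norm_num) (by norm_num)
  refine ⟨hfirst, hsecond, ?_⟩
  rintro ⟨m, hm, hc, hd⟩
  exact hsecond m ((hfirst m hm).mp hc) hd
end

section
/- There is no positive integer m such that both (m+2)^2 + 96 and 25m^2 - 84m + 900 are perfect squares. -/
/-!
Writing `|c| = m + 2 + k`, the first equation becomes `k * (k + 2m + 4) = 96`, so `k ≤ 9` and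
checking the nine values of `k` leaves only `m ∈ {3, 8, 21}`. For these `m` the second expression
takes the values `873`, `1828`, `10161`, each strictly between two consecutive squares.
-/

theorem eq_three_or_eight_or_twentyOne_of_sq_add_ninetySix_eq_sq {m c : ℤ} (hm : 0 < m)
    (h : (m + 2) ^ 2 + 96 = c ^ 2) : m = 3 ∨ m = 8 ∨ m = 21 := by
  rw [← sq_abs c] at h
  obtain ⟨k, hk, hck⟩ : ∃ k : ℤ, 0 < k ∧ |c| = m + 2 + k := by
    refine ⟨|c| - (m + 2), ?_, by ring⟩
    nlinarith [abs_nonneg c]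
  have hfactor : k * (k + 2 * (m + 2)) = 96 := by rw [hck] at h; linarith
  have hk9 : k ≤ 9 := by nlinarith
  interval_cases k <;> omega

theorem stmt_11 :
    ¬ ∃ m : ℤ, 0 < m ∧ (∃ c : ℤ, (m + 2) ^ 2 + 96 = c ^ 2) ∧
      (∃ d : ℤ, 25 * m ^ 2 - 84 * m + 900 = d ^ 2) := by
  rintro ⟨m, hm, ⟨c, hc⟩, ⟨d, hd⟩⟩
  have hsq : IsSquare (25 * m ^ 2 - 84 * m + 900) := ⟨d, by rw [hd, sq]⟩
  rcases eq_three_or_eight_or_twentyOne_of_sq_add_ninetySix_eq_sq hm hc with rfl | rfl | rfl <;>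
    norm_num at hsq
end
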